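/- Let G act on X, and for each condition c let K¹_c, ..., Kⁿ_c be Markov kernels such that the first kernels satisfy K_{T·c}(x, A) = K_c(x, A) (invariance in c and x), one kernel satisfies K_{T·c}(x, T·A) = K_c(x, A), and the remaining kernels satisfy K_{T·c}(T·x, T·A) = K_c(x, A). If the initial distribution μ_c satisfies μ_{T·c} = μ_c, then the final marginal ν_c obtained by composing the kernels satisfies ν_{T·c}(T·A) = ν_c(A). -/

import Mathlib

open MeasureTheory
open scoped Pointwise

/-! We show `ν_{T•c} = T₊ ν_c`. Along the chain, the kernels before `m` are the same for `T • c`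
and `c`; the kernel at `m` for `T • c` is the one for `c` followed by the push-forward `T₊`; and
each later kernel commutes with `T₊`, so the push-forward created at `m` is carried to the end. -/

/-- The marginal obtained by pushing an initial measure `μ c` through the
kernels `κ 0 c, κ 1 c, …, κ (n-1) c` in order. -/
noncomputable def finalMarginal {C X : Type*} [MeasurableSpace X] (n : ℕ)
    (μ : C → Measure X) (κ : Fin n → C → X → Measure X) (c : C) : Measure X :=
  (List.finRange n).foldl (fun ρ i => ρ.bind (κ i c)) (μ c)

namespace List

theorem foldl_hom_of_mem {α β γ : Type*} (Φ : α → γ) (f : γ → β → γ) (g : α → β → α) :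
    ∀ (l : List β), (∀ i ∈ l, ∀ ρ, f (Φ ρ) i = Φ (g ρ i)) →
      ∀ ρ, l.foldl f (Φ ρ) = Φ (l.foldl g ρ)
  | [], _, _ => rfl
  | i :: l, h, ρ => by
    rw [foldl_cons, foldl_cons, h i mem_cons_self ρ]
    exact foldl_hom_of_mem Φ f g l (fun j hj => h j (mem_cons_of_mem i hj)) _

theorem foldl_eq_apply_foldl_of_pairwise_lt {α β : Type*} [LinearOrder β]
    (Φ : α → α) (f g : α → β → α) {m : β}
    (hbefore : ∀ i < m, ∀ ρ, f ρ i = g ρ i)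
    (hat : ∀ ρ, f ρ m = Φ (g ρ m))
    (hafter : ∀ i, m < i → ∀ ρ, f (Φ ρ) i = Φ (g ρ i)) :
    ∀ (l : List β), l.Pairwise (· < ·) → m ∈ l → ∀ ρ, l.foldl f ρ = Φ (l.foldl g ρ)
  | [], _, hm, _ => absurd hm not_mem_nil
  | i :: l, hl, hm, ρ => by
    rw [pairwise_cons] at hl
    rw [foldl_cons, foldl_cons]
    rcases lt_trichotomy i m with hi | rfl | hi
    · have hml : m ∈ l := (mem_cons.mp hm).resolve_left hi.ne'
      rw [hbefore i hi ρ]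
      exact foldl_eq_apply_foldl_of_pairwise_lt Φ f g hbefore hat hafter l hl.2 hml _
    · rw [hat ρ]
      exact foldl_hom_of_mem Φ f g l (fun j hj => hafter j (hl.1 j hj)) _
    · have hml : m ∈ l := (mem_cons.mp hm).resolve_left hi.ne
      exact absurd (hl.1 m hml) (lt_asymm hi)

end List

namespace MeasureTheory.Measure

variable {α β γ : Type*} [MeasurableSpace α] [MeasurableSpace β] [MeasurableSpace γ]

theorem _root_.MeasurableEquiv.aemeasurable_map_comp_iff (e : β ≃ᵐ γ) {ρ : Measure α}
    {f : α → Measure β} : AEMeasurable (fun x => (f x).map e) ρ ↔ AEMeasurable f ρ := by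
  refine ⟨fun h => ?_, fun h => (measurable_map _ e.measurable).comp_aemeasurable h⟩
  simpa only [Function.comp_def, e.map_symm_map] using
    (measurable_map _ e.symm.measurable).comp_aemeasurable h

theorem bind_map_right (e : β ≃ᵐ γ) (ρ : Measure α) (f : α → Measure β) :
    ρ.bind (fun x => (f x).map e) = (ρ.bind f).map e := by
  by_cases hf : AEMeasurable f ρ
  · rw [bind, bind, ← join_map_map e.measurable,
      AEMeasurable.map_map_of_aemeasurable (measurable_map _ e.measurable).aemeasurable hf]
    rfl
  · have hf' : ¬AEMeasurable (fun x => (f x).map e) ρ := e.aemeasurable_map_comp_iff.not.mpr hf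
    simp [bind, map_of_not_aemeasurable hf, map_of_not_aemeasurable hf']

theorem bind_map_left {e : α → β} (he : MeasurableEmbedding e) (ρ : Measure α)
    (f : β → Measure γ) : (ρ.map e).bind f = ρ.bind (f ∘ e) := by
  by_cases hf : AEMeasurable f (ρ.map e)
  · rw [bind, bind, hf.map_map_of_aemeasurable he.measurable.aemeasurable]
  · have hf' : ¬AEMeasurable (f ∘ e) ρ := he.aemeasurable_map_iff.not.mp hf
    rw [bind, bind, map_of_not_aemeasurable hf, map_of_not_aemeasurable hf']

variable {G : Type*} [Group G] [MulAction G β] [MeasurableConstSMul G β]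

theorem map_smul_apply_smul (T : G) (ν : Measure β) (A : Set β) :
    ν.map (T • ·) (T • A) = ν A := by
  rw [← MeasurableEquiv.smul_apply, MeasurableEquiv.map_apply, MeasurableEquiv.smul_apply,
    Set.preimage_smul, inv_smul_smul]

theorem eq_map_smul_of_apply_smul {T : G} {ν ν' : Measure β}
    (h : ∀ A, MeasurableSet A → ν' (T • A) = ν A) : ν' = ν.map (T • ·) := by
  ext A hA
  rw [← smul_inv_smul T A, h _ (hA.const_smul T⁻¹), map_smul_apply_smul]

end MeasureTheory.Measure

open Measure in
theorem finalMarginal_equivariant_general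
    {G C X : Type*} [Group G] [MulAction G C]
    [MeasurableSpace X] [MulAction G X]
    (hmeas : ∀ T : G, Measurable fun x : X => T • x)
    (n : ℕ) (μ : C → Measure X)
    (hμ : ∀ (T : G) (c : C), μ (T • c) = μ c)
    (κ : Fin n → C → X → Measure X)
    (m : Fin n)
    (hInv : ∀ (i : Fin n), i < m → ∀ (T : G) (c : C) (x : X) (A : Set X),
      MeasurableSet A → κ i (T • c) x A = κ i c x A)
    (hMid : ∀ (T : G) (c : C) (x : X) (A : Set X),
      MeasurableSet A → κ m (T • c) x (T • A) = κ m c x A)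
    (hEquiv : ∀ (i : Fin n), m < i → ∀ (T : G) (c : C) (x : X) (A : Set X),
      MeasurableSet A → κ i (T • c) (T • x) (T • A) = κ i c x A) :
    ∀ (T : G) (c : C) (A : Set X), MeasurableSet A →
      finalMarginal n μ κ (T • c) (T • A) = finalMarginal n μ κ c A := by
  intro T c A _
  have : MeasurableConstSMul G X := ⟨hmeas⟩
  let e : X ≃ᵐ X := MeasurableEquiv.smul T
  suffices finalMarginal n μ κ (T • c) = (finalMarginal n μ κ c).map e by
    rw [this, MeasurableEquiv.smul_apply, map_smul_apply_smul]
  rw [finalMarginal, finalMarginal, hμ]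
  refine List.foldl_eq_apply_foldl_of_pairwise_lt (map e) _ _
    (fun i hi ρ => ?_) (fun ρ => ?_) (fun i hi ρ => ?_)
    _ (List.pairwise_lt_finRange n) (List.mem_finRange m) (μ c)
  · congr 1
    exact funext fun x => ext fun B hB => hInv i hi T c x B hB
  · have hκ : κ m (T • c) = fun x => (κ m c x).map e :=
      funext fun x => eq_map_smul_of_apply_smul (hMid T c x)
    rw [hκ, Measure.bind_map_right]
  · have hκ : κ i (T • c) ∘ e = fun x => (κ i c x).map e :=
      funext fun x => eq_map_smul_of_apply_smul (hEquiv i hi T c x)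
    rw [Measure.bind_map_left e.measurableEmbedding, hκ, Measure.bind_map_right]

/-- If the initial distribution is invariant in the condition `c`, the kernels
before position `m` are invariant in both `c` and the state, the kernel at
position `m` satisfies `K_{T·c}(x, T·A) = K_c(x, A)`, and the kernels after
position `m` are fully equivariant (`K_{T·c}(T·x, T·A) = K_c(x, A)`), then the
final marginal satisfies `ν_{T·c}(T·A) = ν_c(A)`. -/
theorem finalMarginal_equivariant
    {G C X : Type*} [Group G] [MulAction G C]
    [MeasurableSpace X] [MulAction G X]
    (hmeas : ∀ T : G, Measurable fun x : X => T • x)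
    (n : ℕ) (μ : C → Measure X) (hprob : ∀ c, IsProbabilityMeasure (μ c))
    (hμ : ∀ (T : G) (c : C), μ (T • c) = μ c)
    (κ : Fin n → C → X → Measure X)
    (hMarkov : ∀ (i : Fin n) (c : C) (x : X), IsProbabilityMeasure (κ i c x))
    (m : Fin n)
    (hInv : ∀ (i : Fin n), i < m → ∀ (T : G) (c : C) (x : X) (A : Set X),
      MeasurableSet A → κ i (T • c) x A = κ i c x A)
    (hMid : ∀ (T : G) (c : C) (x : X) (A : Set X),
      MeasurableSet A → κ m (T • c) x (T • A) = κ m c x A)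
    (hEquiv : ∀ (i : Fin n), m < i → ∀ (T : G) (c : C) (x : X) (A : Set X),
      MeasurableSet A → κ i (T • c) (T • x) (T • A) = κ i c x A) :
    ∀ (T : G) (c : C) (A : Set X), MeasurableSet A →
      finalMarginal n μ κ (T • c) (T • A) = finalMarginal n μ κ c A :=
  finalMarginal_equivariant_general hmeas n μ hμ κ m hInv hMid hEquiv
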